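/- Let (X,d) be a proper metric space, N ≥ 1, λ ∈ Δ_N, and suppose there exist J ⊆ {1,…,N} with ∑_{j∈J} λⱼ ≥ 1/2 and ρ ∈ 𝒫₁(X) such that νⱼ = ρ for all j ∈ J. Then ρ ∈ Med_λ(ν₁,…,ν_N), i.e. ∑ᵢ λᵢ W₁(νᵢ,ρ) ≤ ∑ᵢ λᵢ W₁(νᵢ,μ) for every μ ∈ 𝒫₁(X). Moreover, if ∑_{j∈J} λⱼ > 1/2, then ρ is the unique Wasserstein median of (ν₁,…,ν_N). -/

import Mathlib

open MeasureTheory Filter Topology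
open scoped ENNReal NNReal

/-- The set of couplings (transport plans): Borel probability measures on `X × X`
with first marginal `μ` and second marginal `ν`. -/
def Couplings {X : Type*} [MeasurableSpace X] (μ ν : Measure X) :
    Set (Measure (X × X)) :=
  {γ | IsProbabilityMeasure γ ∧ γ.map Prod.fst = μ ∧ γ.map Prod.snd = ν}

/-- The Wasserstein distance of order `1` between two measures on a metric space:
the infimum over couplings `γ` of `∫ d(x,y) dγ`. -/
noncomputable def W1 {X : Type*} [MetricSpace X] [MeasurableSpace X]
    (μ ν : Measure X) : ℝ :=
  (⨅ γ ∈ Couplings μ ν, ∫⁻ p, edist p.1 p.2 ∂γ).toReal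

/-- `𝒫₁(X)`: Borel probability measures on `X` with finite first moment. -/
def P1 (X : Type*) [MetricSpace X] [MeasurableSpace X] : Set (Measure X) :=
  {μ | IsProbabilityMeasure μ ∧ ∀ x₀ : X, Integrable (fun x => dist x₀ x) μ}

/-- `λ` belongs to the simplex `Δ_N`: nonnegative weights summing to `1`. -/
def memSimplex {N : ℕ} (l : Fin N → ℝ) : Prop :=
  (∀ i, 0 ≤ l i) ∧ ∑ i, l i = 1

/-- The dispersion functional `μ ↦ ∑ᵢ λᵢ W₁(νᵢ, μ)`. -/
noncomputable def medCost {X : Type*} [MetricSpace X] [MeasurableSpace X] {N : ℕ}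
    (l : Fin N → ℝ) (ν : Fin N → Measure X) (μ : Measure X) : ℝ :=
  ∑ i, l i * W1 (ν i) μ

/-- The set of Wasserstein medians of `ν₁, …, ν_N` with weights `λ`:
minimizers over `𝒫₁(X)` of the dispersion functional. -/
def Med {X : Type*} [MetricSpace X] [MeasurableSpace X] {N : ℕ}
    (l : Fin N → ℝ) (ν : Fin N → Measure X) : Set (Measure X) :=
  {μ | μ ∈ P1 X ∧ ∀ ρ ∈ P1 X, medCost l ν μ ≤ medCost l ν ρ}

set_option linter.unusedSectionVars false

section Aux

open ProbabilityTheory Metric EMetric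

variable {X : Type*} [MetricSpace X] [MeasurableSpace X]

/-- `ℝ≥0∞`-valued Wasserstein-1 distance. -/
noncomputable def W1e (μ ν : Measure X) : ℝ≥0∞ :=
  ⨅ γ ∈ Couplings μ ν, ∫⁻ p, edist p.1 p.2 ∂γ

lemma W1_eq_toReal (μ ν : Measure X) : W1 μ ν = (W1e μ ν).toReal := rfl

lemma nonempty_of_prob (μ : Measure X) [hμ : IsProbabilityMeasure μ] : Nonempty X := by
  by_contra h
  rw [not_nonempty_iff] at h
  have : μ Set.univ = 1 := hμ.measure_univ
  simp [Set.univ_eq_empty_iff.2 h] at this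

lemma W1e_le {μ ν : Measure X} {γ : Measure (X × X)} (hγ : γ ∈ Couplings μ ν) :
    W1e μ ν ≤ ∫⁻ p, edist p.1 p.2 ∂γ :=
  biInf_le _ hγ

lemma prod_mem_couplings (μ ν : Measure X) [IsProbabilityMeasure μ] [IsProbabilityMeasure ν] :
    μ.prod ν ∈ Couplings μ ν :=
  ⟨inferInstance, Measure.fst_prod, Measure.snd_prod⟩

lemma couplings_swap {μ ν : Measure X} {γ : Measure (X × X)} (hγ : γ ∈ Couplings μ ν) :
    γ.map Prod.swap ∈ Couplings ν μ := by
  obtain ⟨h1, h2, h3⟩ := hγ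
  haveI := h1
  refine ⟨Measure.isProbabilityMeasure_map measurable_swap.aemeasurable, ?_, ?_⟩
  · rw [Measure.map_map measurable_fst measurable_swap]
    exact h3
  · rw [Measure.map_map measurable_snd measurable_swap]
    exact h2

variable [BorelSpace X] [SecondCountableTopology X]

lemma medist : Measurable fun p : X × X => edist p.1 p.2 := measurable_edist

lemma lintegral_swap_edist {γ : Measure (X × X)} :
    ∫⁻ p, edist p.1 p.2 ∂(γ.map Prod.swap) = ∫⁻ p, edist p.1 p.2 ∂γ := by
  rw [lintegral_map medist measurable_swap]
  simp [edist_comm]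

lemma W1e_symm (μ ν : Measure X) : W1e μ ν = W1e ν μ := by
  have key : ∀ (μ ν : Measure X), W1e ν μ ≤ W1e μ ν := by
    intro μ ν
    refine le_iInf₂ fun γ hγ => ?_
    calc W1e ν μ ≤ ∫⁻ p, edist p.1 p.2 ∂(γ.map Prod.swap) := W1e_le (couplings_swap hγ)
    _ = ∫⁻ p, edist p.1 p.2 ∂γ := lintegral_swap_edist
  exact le_antisymm (key ν μ) (key μ ν)

lemma W1e_self (μ : Measure X) [IsProbabilityMeasure μ] : W1e μ μ = 0 := by
  have hd : Measurable fun x : X => (x, x) := measurable_id.prodMk measurable_id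
  have hmem : μ.map (fun x => (x, x)) ∈ Couplings μ μ := by
    refine ⟨Measure.isProbabilityMeasure_map hd.aemeasurable, ?_, ?_⟩
    · rw [Measure.map_map measurable_fst hd]; simp [Function.comp_def]
    · rw [Measure.map_map measurable_snd hd]; simp [Function.comp_def]
  refine le_antisymm ?_ zero_le
  calc W1e μ μ ≤ ∫⁻ p, edist p.1 p.2 ∂(μ.map fun x => (x, x)) := W1e_le hmem
  _ = ∫⁻ x, edist x x ∂μ := lintegral_map medist hd
  _ = 0 := by simp

lemma lintegral_edist_lt_top {μ : Measure X} (hμ : μ ∈ P1 X) (x₀ : X) :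
    ∫⁻ x, edist x₀ x ∂μ < ∞ := by
  have h := (hμ.2 x₀).hasFiniteIntegral
  rw [HasFiniteIntegral] at h
  refine lt_of_eq_of_lt ?_ h
  refine lintegral_congr fun x => ?_
  rw [edist_dist, ← Real.enorm_eq_ofReal dist_nonneg]

lemma W1e_lt_top {μ ν : Measure X} (hμ : μ ∈ P1 X) (hν : ν ∈ P1 X) : W1e μ ν < ∞ := by
  haveI := hμ.1; haveI := hν.1
  have : Nonempty X := nonempty_of_prob μ
  obtain ⟨x₀⟩ := this
  have hle : W1e μ ν ≤ ∫⁻ p, edist p.1 p.2 ∂(μ.prod ν) := W1e_le (prod_mem_couplings μ ν)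
  refine lt_of_le_of_lt (hle.trans ?_) (?_ : (∫⁻ x, edist x₀ x ∂μ) + ∫⁻ x, edist x₀ x ∂ν < ∞)
  · calc ∫⁻ p, edist p.1 p.2 ∂(μ.prod ν)
        ≤ ∫⁻ p : X × X, edist x₀ p.1 + edist x₀ p.2 ∂(μ.prod ν) := by
          refine lintegral_mono fun p => ?_
          calc edist p.1 p.2 ≤ edist p.1 x₀ + edist x₀ p.2 := edist_triangle _ _ _
          _ = edist x₀ p.1 + edist x₀ p.2 := by rw [edist_comm p.1 x₀]
    _ = (∫⁻ p : X × X, edist x₀ p.1 ∂(μ.prod ν)) + ∫⁻ p : X × X, edist x₀ p.2 ∂(μ.prod ν) :=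
          lintegral_add_left ((measurable_edist_right.comp measurable_fst)) _
    _ = (∫⁻ x, edist x₀ x ∂μ) + ∫⁻ x, edist x₀ x ∂ν := by
          have e1 : ∫⁻ p : X × X, edist x₀ p.1 ∂(μ.prod ν)
              = ∫⁻ x, edist x₀ x ∂((μ.prod ν).map Prod.fst) :=
            (lintegral_map measurable_edist_right measurable_fst).symm
          have e2 : ∫⁻ p : X × X, edist x₀ p.2 ∂(μ.prod ν)
              = ∫⁻ x, edist x₀ x ∂((μ.prod ν).map Prod.snd) :=
            (lintegral_map measurable_edist_right measurable_snd).symm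
          have f1 : (μ.prod ν).map Prod.fst = μ := Measure.fst_prod
          have f2 : (μ.prod ν).map Prod.snd = ν := Measure.snd_prod
          rw [e1, e2, f1, f2]
  · exact ENNReal.add_lt_top.2 ⟨lintegral_edist_lt_top hμ x₀, lintegral_edist_lt_top hν x₀⟩

end Aux

section Triangle

open ProbabilityTheory

variable {X : Type*} [MetricSpace X] [MeasurableSpace X] [BorelSpace X]
  [SecondCountableTopology X] [CompleteSpace X]

lemma glue_cost {μ₁ μ₂ μ₃ : Measure X} {γ β : Measure (X × X)}
    (hγ : γ ∈ Couplings μ₁ μ₂) (hβ : β ∈ Couplings μ₂ μ₃) :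
    W1e μ₁ μ₃ ≤ (∫⁻ p, edist p.1 p.2 ∂γ) + ∫⁻ p, edist p.1 p.2 ∂β := by
  haveI := hγ.1
  haveI := hβ.1
  haveI : IsProbabilityMeasure μ₂ := by
    rw [← hγ.2.2]; exact Measure.isProbabilityMeasure_map measurable_snd.aemeasurable
  haveI : Nonempty X := nonempty_of_prob μ₂
  have hm21 : Measurable fun p : X × X => edist p.2 p.1 :=
    medist.comp (measurable_snd.prodMk measurable_fst)
  set γ' : Measure (X × X) := γ.map Prod.swap with hγ'def
  have hγ' : γ' ∈ Couplings μ₂ μ₁ := couplings_swap hγ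
  haveI : IsProbabilityMeasure γ' := hγ'.1
  have hγ'fst : γ'.fst = μ₂ := hγ'.2.1
  have hβfst : β.fst = μ₂ := hβ.2.1
  set κ : Kernel X X := γ'.condKernel with hκdef
  set η : Kernel X X := β.condKernel with hηdef
  have hdisγ : μ₂ ⊗ₘ κ = γ' := by
    rw [hκdef, ← hγ'fst]; exact γ'.disintegrate γ'.condKernel
  have hdisβ : μ₂ ⊗ₘ η = β := by
    rw [hηdef, ← hβfst]; exact β.disintegrate β.condKernel
  set M : Measure (X × (X × X)) := μ₂ ⊗ₘ (κ ×ₖ η) with hMdef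
  haveI : IsProbabilityMeasure M := by rw [hMdef]; infer_instance
  set θ : Measure (X × X) := M.map Prod.snd with hθdef
  -- marginals of θ
  have hsnd_eq : ∀ (ξ : Kernel X X), IsMarkovKernel ξ → ∀ s : Set X, MeasurableSet s →
      (μ₂ ⊗ₘ ξ).map Prod.snd s = ∫⁻ a, ξ a s ∂μ₂ := by
    intro ξ hξ s hs
    rw [Measure.map_apply measurable_snd hs,
      Measure.compProd_apply (measurable_snd hs)]
    rfl
  have hθfst : θ.map Prod.fst = μ₁ := by
    have h1 : θ.map Prod.fst = (μ₂ ⊗ₘ κ).map Prod.snd := by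
      ext s hs
      rw [hθdef, Measure.map_map measurable_fst measurable_snd,
        Measure.map_apply (measurable_fst.comp measurable_snd) hs,
        Measure.compProd_apply ((measurable_fst.comp measurable_snd) hs),
        hsnd_eq κ inferInstance s hs]
      refine lintegral_congr fun a => ?_
      have h2 : (Prod.mk a ⁻¹' ((Prod.fst ∘ Prod.snd : X × (X × X) → X) ⁻¹' s)) = s ×ˢ Set.univ := by
        ext p; simp [Set.mem_prod]
      rw [h2, Kernel.prod_apply, Measure.prod_prod, measure_univ, mul_one]
    rw [h1, hdisγ]
    exact hγ'.2.2
  have hθsnd : θ.map Prod.snd = μ₃ := by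
    have h1 : θ.map Prod.snd = (μ₂ ⊗ₘ η).map Prod.snd := by
      ext s hs
      rw [hθdef, Measure.map_map measurable_snd measurable_snd,
        Measure.map_apply (measurable_snd.comp measurable_snd) hs,
        Measure.compProd_apply ((measurable_snd.comp measurable_snd) hs),
        hsnd_eq η inferInstance s hs]
      refine lintegral_congr fun a => ?_
      have h2 : (Prod.mk a ⁻¹' ((Prod.snd ∘ Prod.snd : X × (X × X) → X) ⁻¹' s)) = Set.univ ×ˢ s := by
        ext p; simp [Set.mem_prod]
      rw [h2, Kernel.prod_apply, Measure.prod_prod, measure_univ, one_mul]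
    rw [h1, hdisβ, hβ.2.2]
  have hθmem : θ ∈ Couplings μ₁ μ₃ :=
    ⟨Measure.isProbabilityMeasure_map measurable_snd.aemeasurable, hθfst, hθsnd⟩
  refine (W1e_le hθmem).trans ?_
  -- cost estimate
  have hcost : ∫⁻ p, edist p.1 p.2 ∂θ
      = ∫⁻ a, ∫⁻ bc : X × X, edist bc.1 bc.2 ∂((κ ×ₖ η) a) ∂μ₂ := by
    rw [hθdef, lintegral_map medist measurable_snd]
    exact Measure.lintegral_compProd (f := fun q : X × (X × X) => edist q.2.1 q.2.2)
      (medist.comp measurable_snd)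
  rw [hcost]
  have hpoint : ∀ a : X, ∫⁻ bc : X × X, edist bc.1 bc.2 ∂((κ ×ₖ η) a)
      ≤ (∫⁻ b, edist b a ∂κ a) + ∫⁻ c, edist a c ∂η a := by
    intro a
    rw [Kernel.prod_apply]
    calc ∫⁻ bc : X × X, edist bc.1 bc.2 ∂((κ a).prod (η a))
        ≤ ∫⁻ bc : X × X, edist bc.1 a + edist a bc.2 ∂((κ a).prod (η a)) :=
          lintegral_mono fun bc => edist_triangle _ _ _
      _ = (∫⁻ bc : X × X, edist bc.1 a ∂((κ a).prod (η a)))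
          + ∫⁻ bc : X × X, edist a bc.2 ∂((κ a).prod (η a)) :=
          lintegral_add_left (measurable_edist_left.comp measurable_fst) _
      _ = (∫⁻ b, edist b a ∂κ a) + ∫⁻ c, edist a c ∂η a := by
          congr 1
          · exact (lintegral_prod (fun bc : X × X => edist bc.1 a)
              (measurable_edist_left.comp measurable_fst).aemeasurable).trans (by simp)
          · exact (lintegral_prod (fun bc : X × X => edist a bc.2)
              (measurable_edist_right.comp measurable_snd).aemeasurable).trans (by simp)
  calc ∫⁻ a, ∫⁻ bc : X × X, edist bc.1 bc.2 ∂((κ ×ₖ η) a) ∂μ₂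
      ≤ ∫⁻ a, (∫⁻ b, edist b a ∂κ a) + ∫⁻ c, edist a c ∂η a ∂μ₂ := lintegral_mono hpoint
    _ = (∫⁻ a, ∫⁻ b, edist b a ∂κ a ∂μ₂) + ∫⁻ a, ∫⁻ c, edist a c ∂η a ∂μ₂ := by
        refine lintegral_add_left ?_ _
        exact Measurable.lintegral_kernel_prod_right
          (f := fun a b => edist b a) hm21
    _ = (∫⁻ p : X × X, edist p.2 p.1 ∂(μ₂ ⊗ₘ κ)) + ∫⁻ p : X × X, edist p.1 p.2 ∂(μ₂ ⊗ₘ η) := by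
        congr 1
        · exact (Measure.lintegral_compProd (f := fun p : X × X => edist p.2 p.1) hm21).symm
        · exact (Measure.lintegral_compProd (f := fun p : X × X => edist p.1 p.2) medist).symm
    _ = (∫⁻ p, edist p.1 p.2 ∂γ) + ∫⁻ p, edist p.1 p.2 ∂β := by
        rw [hdisγ, hdisβ]
        congr 1
        rw [hγ'def, lintegral_map hm21 measurable_swap]
        simp

lemma W1e_triangle (μ₁ μ₂ μ₃ : Measure X) :
    W1e μ₁ μ₃ ≤ W1e μ₁ μ₂ + W1e μ₂ μ₃ := by
  calc W1e μ₁ μ₃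
      ≤ ⨅ γ ∈ Couplings μ₁ μ₂, ⨅ β ∈ Couplings μ₂ μ₃,
          ((∫⁻ p, edist p.1 p.2 ∂γ) + ∫⁻ p, edist p.1 p.2 ∂β) :=
        le_iInf₂ fun γ hγ => le_iInf₂ fun β hβ => glue_cost hγ hβ
    _ = W1e μ₁ μ₂ + W1e μ₂ μ₃ := by
        rw [W1e, W1e]
        simp_rw [ENNReal.iInf_add, ENNReal.add_iInf]

end Triangle

section Ident

open Metric EMetric

variable {X : Type*} [MetricSpace X] [MeasurableSpace X] [BorelSpace X]
  [SecondCountableTopology X]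

lemma thick_lip {δ : ℝ} (F : Set X) (x y : X) :
    thickenedIndicatorAux δ F x
      ≤ thickenedIndicatorAux δ F y + edist x y / ENNReal.ofReal δ := by
  set d := ENNReal.ofReal δ
  set A := infEdist x F / d
  set B := infEdist y F / d
  have hBA : B ≤ A + edist x y / d := by
    calc B ≤ (infEdist x F + edist y x) / d :=
        ENNReal.div_le_div_right (infEdist_le_infEdist_add_edist) d
    _ = A + edist y x / d := by rw [ENNReal.add_div]
    _ = A + edist x y / d := by rw [edist_comm]
  calc thickenedIndicatorAux δ F x = 1 - A := rfl
  _ ≤ (1 - B) + B - A := by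
      rw [tsub_le_iff_right]
      calc (1 : ℝ≥0∞) ≤ 1 - B + B := le_tsub_add
      _ ≤ 1 - B + B - A + A := le_tsub_add
  _ ≤ (1 - B) + (A + edist x y / d) - A := by
      exact tsub_le_tsub_right (add_le_add le_rfl hBA) A
  _ ≤ (1 - B) + edist x y / d := by
      rw [← add_assoc, add_comm (1-B) A, add_assoc]
      exact tsub_le_iff_left.2 le_rfl
  _ = thickenedIndicatorAux δ F y + edist x y / d := rfl

lemma measure_le_of_W1e_eq_zero {μ ν : Measure X}
    [IsProbabilityMeasure μ] [IsProbabilityMeasure ν]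
    (h : W1e μ ν = 0) {F : Set X} (hF : IsClosed F) : μ F ≤ ν F := by
  have key : ∀ δ : ℝ, 0 < δ → μ F ≤ ν (thickening δ F) := by
    intro δ hδ
    set f := thickenedIndicatorAux δ F with hfdef
    have hfmeas : Measurable f := (continuous_thickenedIndicatorAux hδ F).measurable
    have step1 : μ F ≤ ∫⁻ x, f x ∂μ := by
      rw [← lintegral_indicator_one hF.measurableSet]
      exact lintegral_mono fun x => indicator_le_thickenedIndicatorAux δ F x
    have step3 : ∫⁻ x, f x ∂ν ≤ ν (thickening δ F) := by
      rw [← lintegral_indicator_one isOpen_thickening.measurableSet]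
      refine lintegral_mono fun x => ?_
      by_cases hx : x ∈ thickening δ F
      · calc f x ≤ 1 := thickenedIndicatorAux_le_one δ F x
        _ = (thickening δ F).indicator 1 x := by simp [hx]
      · rw [hfdef, thickenedIndicatorAux_zero hδ F hx]
        simp
    have step2 : ∫⁻ x, f x ∂μ ≤ ∫⁻ x, f x ∂ν := by
      have hνfin : ∫⁻ x, f x ∂ν < ∞ := by
        calc ∫⁻ x, f x ∂ν ≤ ∫⁻ _, 1 ∂ν :=
            lintegral_mono fun x => thickenedIndicatorAux_le_one δ F x
        _ = 1 := by simp
        _ < ∞ := ENNReal.one_lt_top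
      refine ENNReal.le_of_forall_pos_le_add fun ε hε _ => ?_
      have hεd : (0 : ℝ≥0∞) < ε * ENNReal.ofReal δ := by
        refine ENNReal.mul_pos ?_ ?_
        · exact_mod_cast (ENNReal.coe_pos.2 hε).ne'
        · exact (ENNReal.ofReal_pos.2 hδ).ne'
      obtain ⟨γ, hγ, hcost⟩ : ∃ γ ∈ Couplings μ ν,
          (∫⁻ p : X × X, edist p.1 p.2 ∂γ) < ε * ENNReal.ofReal δ := by
        have hlt : W1e μ ν < ε * ENNReal.ofReal δ := h ▸ hεd
        rw [W1e] at hlt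
        simp only [iInf_lt_iff] at hlt
        obtain ⟨γ, hγ, hc⟩ := hlt
        exact ⟨γ, hγ, hc⟩
      have hμγ : ∫⁻ x, f x ∂μ = ∫⁻ p : X × X, f p.1 ∂γ := by
        rw [← hγ.2.1, lintegral_map hfmeas measurable_fst]
      have hνγ : ∫⁻ x, f x ∂ν = ∫⁻ p : X × X, f p.2 ∂γ := by
        rw [← hγ.2.2, lintegral_map hfmeas measurable_snd]
      calc ∫⁻ x, f x ∂μ = ∫⁻ p : X × X, f p.1 ∂γ := hμγ
      _ ≤ ∫⁻ p : X × X, f p.2 + edist p.1 p.2 / ENNReal.ofReal δ ∂γ :=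
          lintegral_mono fun p => thick_lip F p.1 p.2
      _ = (∫⁻ p : X × X, f p.2 ∂γ) + ∫⁻ p : X × X, edist p.1 p.2 / ENNReal.ofReal δ ∂γ :=
          lintegral_add_left (hfmeas.comp measurable_snd) _
      _ ≤ (∫⁻ x, f x ∂ν) + ε := by
          rw [← hνγ]
          refine add_le_add le_rfl ?_
          have : ∫⁻ p : X × X, edist p.1 p.2 / ENNReal.ofReal δ ∂γ
              = (∫⁻ p : X × X, edist p.1 p.2 ∂γ) / ENNReal.ofReal δ := by
            simp_rw [ENNReal.div_eq_inv_mul]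
            exact lintegral_const_mul _ medist
          rw [this]
          exact ENNReal.div_le_of_le_mul hcost.le
    exact step1.trans (step2.trans step3)
  have htend : Tendsto (fun δ => ν (thickening δ F)) (𝓝[>] 0) (𝓝 (ν F)) :=
    tendsto_measure_thickening_of_isClosed ⟨1, one_pos, measure_ne_top ν _⟩ hF
  exact ge_of_tendsto htend (eventually_nhdsWithin_of_forall fun δ hδ => key δ hδ)

lemma eq_of_W1e_eq_zero {μ ν : Measure X}
    [IsProbabilityMeasure μ] [IsProbabilityMeasure ν]
    (h : W1e μ ν = 0) : μ = ν := by
  have h' : W1e ν μ = 0 := by rw [W1e_symm]; exact h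
  have hle : ∀ F : Set X, IsClosed F → μ F = ν F := fun F hF =>
    le_antisymm (measure_le_of_W1e_eq_zero h hF) (measure_le_of_W1e_eq_zero h' hF)
  refine ext_of_generate_finite {s : Set X | IsClosed s} ?_ isPiSystem_isClosed
    (fun s hs => hle s hs) ?_
  · rw [BorelSpace.measurable_eq (α := X), borel_eq_generateFrom_isClosed]
  · rw [hle Set.univ isClosed_univ]

end Ident

section RealLemmas

variable {X : Type*} [MetricSpace X] [MeasurableSpace X] [BorelSpace X]
  [SecondCountableTopology X] [CompleteSpace X]

lemma W1_nonneg (μ ν : Measure X) : 0 ≤ W1 μ ν := ENNReal.toReal_nonneg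

lemma W1_self (μ : Measure X) [IsProbabilityMeasure μ] : W1 μ μ = 0 := by
  rw [W1_eq_toReal, W1e_self]; simp

lemma W1_symm (μ ν : Measure X) : W1 μ ν = W1 ν μ := by
  rw [W1_eq_toReal, W1_eq_toReal, W1e_symm]

lemma W1_triangle {μ ν ξ : Measure X} (hμ : μ ∈ P1 X) (hν : ν ∈ P1 X) (hξ : ξ ∈ P1 X) :
    W1 μ ξ ≤ W1 μ ν + W1 ν ξ := by
  have h := W1e_triangle (X := X) μ ν ξ
  rw [W1_eq_toReal, W1_eq_toReal, W1_eq_toReal,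
    ← ENNReal.toReal_add (W1e_lt_top hμ hν).ne (W1e_lt_top hν hξ).ne]
  exact ENNReal.toReal_mono
    (ENNReal.add_ne_top.2 ⟨(W1e_lt_top hμ hν).ne, (W1e_lt_top hν hξ).ne⟩) h

lemma W1_eq_zero_iff {μ ν : Measure X} (hμ : μ ∈ P1 X) (hν : ν ∈ P1 X)
    (h : W1 μ ν = 0) : μ = ν := by
  haveI := hμ.1; haveI := hν.1
  refine eq_of_W1e_eq_zero ?_
  rw [W1_eq_toReal] at h
  rcases (ENNReal.toReal_eq_zero_iff _).1 h with h0 | htop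
  · exact h0
  · exact absurd htop (W1e_lt_top hμ hν).ne

end RealLemmas

theorem median_threshold_effect'
    {X : Type*} [MetricSpace X] [ProperSpace X] [MeasurableSpace X] [BorelSpace X]
    {N : ℕ} (hN : 1 ≤ N) {l : Fin N → ℝ} (hl : (∀ i, 0 ≤ l i) ∧ ∑ i, l i = 1)
    {ν : Fin N → Measure X} (hν : ∀ i, ν i ∈ P1 X)
    (J : Finset (Fin N)) (hJ : 1 / 2 ≤ ∑ j ∈ J, l j)
    {ρ : Measure X} (hρ : ρ ∈ P1 X) (hνJ : ∀ j ∈ J, ν j = ρ) :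
    (ρ ∈ P1 X ∧ ∀ μ ∈ P1 X, (∑ i, l i * W1 (ν i) ρ) ≤ ∑ i, l i * W1 (ν i) μ) ∧
      (1 / 2 < ∑ j ∈ J, l j →
        ∀ μ, (μ ∈ P1 X ∧ ∀ ρ' ∈ P1 X, (∑ i, l i * W1 (ν i) μ) ≤ ∑ i, l i * W1 (ν i) ρ')
          → μ = ρ) := by
  haveI := hρ.1
  set s : ℝ := ∑ j ∈ J, l j with hsdef
  have hcompl : ∑ i ∈ Jᶜ, l i = 1 - s := by
    have := Finset.sum_add_sum_compl J l
    rw [hl.2] at this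
    linarith
  -- medCost at ρ
  have hA : (∑ i, l i * W1 (ν i) ρ) = ∑ i ∈ Jᶜ, l i * W1 (ν i) ρ := by
    rw [← Finset.sum_add_sum_compl J fun i => l i * W1 (ν i) ρ]
    have : ∀ i ∈ J, l i * W1 (ν i) ρ = 0 := by
      intro i hi
      rw [hνJ i hi, W1_self]
      ring
    rw [Finset.sum_congr rfl this]
    simp
  -- main inequalities, for any μ ∈ P1
  have hB : ∀ μ ∈ P1 X, (∑ i, l i * W1 (ν i) μ)
      = s * W1 ρ μ + ∑ i ∈ Jᶜ, l i * W1 (ν i) μ := by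
    intro μ hμ
    rw [← Finset.sum_add_sum_compl J fun i => l i * W1 (ν i) μ]
    congr 1
    have : ∀ i ∈ J, l i * W1 (ν i) μ = l i * W1 ρ μ := by
      intro i hi; rw [hνJ i hi]
    rw [Finset.sum_congr rfl this, ← Finset.sum_mul]
  have hC : ∀ μ ∈ P1 X, (∑ i, l i * W1 (ν i) ρ)
      ≤ (∑ i ∈ Jᶜ, l i * W1 (ν i) μ) + (1 - s) * W1 ρ μ := by
    intro μ hμ
    rw [hA]
    have hterm : ∀ i ∈ Jᶜ, l i * W1 (ν i) ρ ≤ l i * (W1 (ν i) μ + W1 ρ μ) := by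
      intro i _
      refine mul_le_mul_of_nonneg_left ?_ (hl.1 i)
      have := W1_triangle (hν i) hμ hρ
      rw [W1_symm μ ρ] at this
      exact this
    calc ∑ i ∈ Jᶜ, l i * W1 (ν i) ρ ≤ ∑ i ∈ Jᶜ, l i * (W1 (ν i) μ + W1 ρ μ) :=
        Finset.sum_le_sum hterm
    _ = (∑ i ∈ Jᶜ, l i * W1 (ν i) μ) + (∑ i ∈ Jᶜ, l i) * W1 ρ μ := by
        rw [Finset.sum_mul, ← Finset.sum_add_distrib]
        congr 1; ext i; ring
    _ = (∑ i ∈ Jᶜ, l i * W1 (ν i) μ) + (1 - s) * W1 ρ μ := by rw [hcompl]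
  constructor
  · refine ⟨hρ, fun μ hμ => ?_⟩
    calc (∑ i, l i * W1 (ν i) ρ)
        ≤ (∑ i ∈ Jᶜ, l i * W1 (ν i) μ) + (1 - s) * W1 ρ μ := hC μ hμ
      _ ≤ (∑ i ∈ Jᶜ, l i * W1 (ν i) μ) + s * W1 ρ μ := by
          have h1 : 1 - s ≤ s := by rw [hsdef]; linarith [hJ]
          have h2 : 0 ≤ W1 ρ μ := W1_nonneg ρ μ
          nlinarith
      _ = ∑ i, l i * W1 (ν i) μ := by rw [hB μ hμ]; ring
  · intro hs μ hμ
    have hW0 : W1 ρ μ = 0 := by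
      have h1 := hμ.2 ρ hρ
      have h2 := hC μ hμ.1
      rw [hB μ hμ.1] at h1
      have h3 : 0 ≤ W1 ρ μ := W1_nonneg ρ μ
      nlinarith
    exact (W1_eq_zero_iff hρ hμ.1 hW0).symm


/-- Threshold effect: if the measures with indices in `J`, where
`∑_{j∈J} λⱼ ≥ 1/2`, all coincide with some `ρ ∈ 𝒫₁(X)`, then `ρ` is a Wasserstein median
of `(ν₁,…,ν_N)`; if moreover `∑_{j∈J} λⱼ > 1/2`, then `ρ` is the unique median. -/
theorem median_threshold_effect
    {X : Type*} [MetricSpace X] [ProperSpace X] [MeasurableSpace X] [BorelSpace X]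
    {N : ℕ} (hN : 1 ≤ N) {l : Fin N → ℝ} (hl : memSimplex l)
    {ν : Fin N → Measure X} (hν : ∀ i, ν i ∈ P1 X)
    (J : Finset (Fin N)) (hJ : 1 / 2 ≤ ∑ j ∈ J, l j)
    {ρ : Measure X} (hρ : ρ ∈ P1 X) (hνJ : ∀ j ∈ J, ν j = ρ) :
    ρ ∈ Med l ν ∧
      (1 / 2 < ∑ j ∈ J, l j → ∀ μ ∈ Med l ν, μ = ρ) := by
  have h := median_threshold_effect' hN hl hν J hJ hρ hνJ
  refine ⟨⟨h.1.1, fun μ hμ => h.1.2 μ hμ⟩, fun hs μ hμ => h.2 hs μ ⟨hμ.1, hμ.2⟩⟩
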